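/- Let (Λ, π, γ) be a quantified scenario such that some f ∈ F is minimal in F ∪ A with respect to ≺_Q (i.e. f ∈ Q_a for all a ∈ A), and let Λ^{f/0}, Λ^{f/1} be the reduced quantified scenarios obtained by substituting 0 (resp. 1) for the f-variable of φ and removing f. Then the probability–maximal-cost Pareto front satisfies the recursion PMC(Λ̂) = PF(Ψ_F(PMC(Λ̂^{f/0}), PMC(Λ̂^{f/1}), π_f)), where Ψ_F(I₁,I₂,p) = {((1−p)·p₁ + p·p₂, max(c₁,c₂)) : (p₁,c₁) ∈ I₁, (p₂,c₂) ∈ I₂}. -/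

import Mathlib

/-! Since `f` lies in every observation set `Q_a`, a strategy may branch on `x_f` before any
decision is taken, so strategies of `Λ` are exactly the strategies `σ⁰ ⋆ σ¹` that play a
strategy of `Λ^{f/0}` or of `Λ^{f/1}` according to `x_f`. Splitting `𝔹^F = 𝔹 × 𝔹^{F∖{f}}`,
the success probability of `σ⁰ ⋆ σ¹` is `(1 - π_f) π̂(σ⁰) + π_f π̂(σ¹)` and its maximal cost is
`max (γ̂_m(σ⁰), γ̂_m(σ¹))`, so `τ_m(Σ_Λ) = Ψ_F(τ_m(Σ_{Λ^{f/0}}), τ_m(Σ_{Λ^{f/1}}), π_f)`.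
Finally `ψ` is monotone for `⊑` and there are finitely many strategies, so each point of
`Ψ_F(I₁, I₂, p)` is dominated by one built from Pareto-optimal points, and the Pareto front
does not change when `I₁, I₂` are replaced by their fronts. -/

open scoped ENNReal

/-- A scenario `(F, A, φ, Q)`: `φ : 𝔹^F × 𝔹^A → 𝔹` is a Boolean function, and
`Q` assigns to each attack `a ∈ A` the subset `Q_a ⊆ F` of failures observable when
deciding about `a`; the family `{Q_a}` is totally ordered by inclusion. -/
structure Scenario (F A : Type) where
  φ : (F → Bool) → (A → Bool) → Bool
  Q : A → Finset F
  chain : ∀ a a' : A, Q a ⊆ Q a' ∨ Q a' ⊆ Q a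

variable {F A : Type}

/-- A strategy: for each `a ∈ A`, a map `σ_a : 𝔹^{Q_a} → 𝔹`. -/
def Strategy (Λ : Scenario F A) : Type :=
  (a : A) → ({f : F // f ∈ Λ.Q a} → Bool) → Bool

/-- The induced map `σ̂ : 𝔹^F → 𝔹^A`, `σ̂(x)_a = σ_a(x|_{Q_a})`. -/
def hatS (Λ : Scenario F A) (σ : Strategy Λ) (x : F → Bool) : A → Bool :=
  fun a => σ a fun f => x f.1

/-- The reduced scenario `Λ^{f/b}`: substitute `b` for the `f`-variable of `φ`,
remove `f` from `F`, and set `Q'_a = Q_a \ {f}`. -/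
def Scenario.reduceF [DecidableEq F] (Λ : Scenario F A) (f : F) (b : Bool) :
    Scenario {g : F // g ≠ f} A where
  φ := fun x y => Λ.φ (fun g => if h : g = f then b else x ⟨g, h⟩) y
  Q := fun a => (Λ.Q a).subtype (· ≠ f)
  chain := fun a a' => (Λ.chain a a').imp
    (fun h x hx => Finset.mem_subtype.mpr (h (Finset.mem_subtype.mp hx)))
    (fun h x hx => Finset.mem_subtype.mpr (h (Finset.mem_subtype.mp hx)))

/-- Restriction of `x ∈ 𝔹^{Q_a}` to `𝔹^{Q_a \ {f}}` (the `x'` of the paper). -/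
def restr [DecidableEq F] (Λ : Scenario F A) (f : F) (b : Bool) (a : A)
    (x : {f' : F // f' ∈ Λ.Q a} → Bool) :
    ({g // g ∈ (Λ.reduceF f b).Q a} → Bool) :=
  fun g => x ⟨g.1.1, Finset.mem_subtype.mp g.2⟩

/-- The composed strategy `σ⁰ ⋆ σ¹`, defined by
`(σ⁰ ⋆ σ¹)_a(x) = (¬x_f ∧ σ⁰_a(x')) ∨ (x_f ∧ σ¹_a(x'))`. -/
def star [DecidableEq F] (Λ : Scenario F A) (f : F) (hf : ∀ a, f ∈ Λ.Q a)
    (σ0 : Strategy (Λ.reduceF f false)) (σ1 : Strategy (Λ.reduceF f true)) :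
    Strategy Λ := fun a x =>
  (!(x ⟨f, hf a⟩) && σ0 a (restr Λ f false a x)) ||
    ((x ⟨f, hf a⟩) && σ1 a (restr Λ f true a x))

/-- Bernoulli weight of an outcome `x ∈ 𝔹^F`:
`(∏_{f : x_f = 1} π_f) · (∏_{f : x_f = 0} (1 - π_f))`. -/
noncomputable def wght [Fintype F] (π : F → ℝ≥0∞) (x : F → Bool) : ℝ≥0∞ :=
  ∏ f, if x f then π f else 1 - π f

/-- Success probability `π̂(σ)`: the probability that `φ(x, σ̂(x)) = 1` when the
coordinates `x_f` are independent Bernoulli(`π_f`). -/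
noncomputable def probS [Fintype F] [DecidableEq F] (Λ : Scenario F A)
    (π : F → ℝ≥0∞) (σ : Strategy Λ) : ℝ≥0∞ :=
  ∑ x : F → Bool, wght π x * (if Λ.φ x (hatS Λ σ x) then 1 else 0)

/-- Cost incurred by strategy `σ` upon observing `x`: `Σ_{a : σ̂(x)_a = 1} γ_a`. -/
noncomputable def costOf [Fintype A] (Λ : Scenario F A) (γ : A → ℝ≥0∞) (σ : Strategy Λ)
    (x : F → Bool) : ℝ≥0∞ :=
  ∑ a, if hatS Λ σ x a then γ a else 0

/-- Maximal cost `γ̂_m(σ) = max_{x ∈ 𝔹^F} Σ_{a : σ̂(x)_a = 1} γ_a`. -/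
noncomputable def maxCost [Fintype F] [DecidableEq F] [Fintype A] (Λ : Scenario F A)
    (γ : A → ℝ≥0∞) (σ : Strategy Λ) : ℝ≥0∞ :=
  ⨆ x : F → Bool, costOf Λ γ σ x

/-- Expected cost `γ̂_e(σ)`. -/
noncomputable def expCost [Fintype F] [DecidableEq F] [Fintype A] (Λ : Scenario F A)
    (π : F → ℝ≥0∞) (γ : A → ℝ≥0∞) (σ : Strategy Λ) : ℝ≥0∞ :=
  ∑ x : F → Bool, wght π x * costOf Λ γ σ x

/-- `D = [0,1] × [0,∞]`: probability–cost pairs, costs in the extended nonnegative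
reals.  We encode it as the pairs `(p, c) : ℝ≥0∞ × ℝ≥0∞` with `p ≤ 1`. -/
def Dom : Set (ℝ≥0∞ × ℝ≥0∞) := {d | d.1 ≤ 1}

/-- `(p,c) ⊑ (p',c')` iff `p ≥ p'` and `c ≤ c'`. -/
def sqle (d d' : ℝ≥0∞ × ℝ≥0∞) : Prop := d'.1 ≤ d.1 ∧ d.2 ≤ d'.2

/-- `d ⊏ d'` iff `d ⊑ d'` and `d ≠ d'`. -/
def slt (d d' : ℝ≥0∞ × ℝ≥0∞) : Prop := sqle d d' ∧ d ≠ d'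

/-- The Pareto front `PF(I) = {d ∈ I : ∀ d' ∈ I, ¬(d' ⊏ d)}`. -/
def PF (I : Set (ℝ≥0∞ × ℝ≥0∞)) : Set (ℝ≥0∞ × ℝ≥0∞) :=
  {d ∈ I | ∀ d' ∈ I, ¬ slt d' d}

/-- `ψ((p₁,c₁),(p₂,c₂),p) = ((1−p)·p₁ + p·p₂, max(c₁,c₂))`. -/
noncomputable def psi (d₁ d₂ : ℝ≥0∞ × ℝ≥0∞) (p : ℝ≥0∞) : ℝ≥0∞ × ℝ≥0∞ :=
  ((1 - p) * d₁.1 + p * d₂.1, max d₁.2 d₂.2)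

/-- `Ψ_F(I₁,I₂,p) = {ψ(d₁,d₂,p) : d₁ ∈ I₁, d₂ ∈ I₂}`. -/
noncomputable def PsiF (I₁ I₂ : Set (ℝ≥0∞ × ℝ≥0∞)) (p : ℝ≥0∞) : Set (ℝ≥0∞ × ℝ≥0∞) :=
  {d | ∃ d₁ ∈ I₁, ∃ d₂ ∈ I₂, d = psi d₁ d₂ p}


section Pareto

lemma sqle_refl (d : ℝ≥0∞ × ℝ≥0∞) : sqle d d := ⟨le_rfl, le_rfl⟩

lemma sqle_trans {d e c : ℝ≥0∞ × ℝ≥0∞} (h : sqle d e) (h' : sqle e c) : sqle d c :=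
  ⟨h'.1.trans h.1, h.2.trans h'.2⟩

lemma sqle_antisymm {d e : ℝ≥0∞ × ℝ≥0∞} (h : sqle d e) (h' : sqle e d) : d = e :=
  Prod.ext (le_antisymm h'.1 h.1) (le_antisymm h.2 h'.2)

lemma PF_subset (I : Set (ℝ≥0∞ × ℝ≥0∞)) : PF I ⊆ I := fun _ hd => hd.1

lemma PF_eq_of_dominated {I J : Set (ℝ≥0∞ × ℝ≥0∞)} (hJI : J ⊆ I)
    (hdom : ∀ d ∈ I, ∃ e ∈ J, sqle e d) : PF I = PF J := by
  ext d
  constructor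
  · rintro ⟨hdI, hmin⟩
    obtain ⟨e, heJ, hed⟩ := hdom d hdI
    obtain rfl : e = d := by_contra fun hne => hmin e (hJI heJ) ⟨hed, hne⟩
    exact ⟨heJ, fun d' hd' => hmin d' (hJI hd')⟩
  · rintro ⟨hdJ, hmin⟩
    refine ⟨hJI hdJ, fun d' hd'I hlt => ?_⟩
    obtain ⟨e, heJ, hed'⟩ := hdom d' hd'I
    rcases eq_or_ne e d with rfl | hne
    · exact hlt.2 (sqle_antisymm hlt.1 hed')
    · exact hmin e heJ ⟨sqle_trans hed' hlt.1, hne⟩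

lemma exists_mem_PF_sqle {I : Set (ℝ≥0∞ × ℝ≥0∞)} (hI : I.Finite) {d : ℝ≥0∞ × ℝ≥0∞}
    (hd : d ∈ I) : ∃ e ∈ PF I, sqle e d := by
  -- `sqle` is the product order on `ℝ≥0∞ᵒᵈ × ℝ≥0∞`
  let ord : ℝ≥0∞ × ℝ≥0∞ → ℝ≥0∞ᵒᵈ × ℝ≥0∞ := fun e => (OrderDual.toDual e.1, e.2)
  obtain ⟨m, ⟨hmI, hmd⟩, hmin⟩ := Set.Finite.exists_minimalFor ord {e ∈ I | sqle e d}
    (hI.subset (Set.sep_subset _ _)) ⟨d, hd, sqle_refl d⟩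
  refine ⟨m, ⟨hmI, fun e he hlt => hlt.2 ?_⟩, hmd⟩
  exact sqle_antisymm hlt.1 (hmin ⟨he, sqle_trans hlt.1 hmd⟩ hlt.1)

lemma PF_image2_PF {g : ℝ≥0∞ × ℝ≥0∞ → ℝ≥0∞ × ℝ≥0∞ → ℝ≥0∞ × ℝ≥0∞}
    (hg : ∀ ⦃d₁ d₂ e₁ e₂⦄, sqle e₁ d₁ → sqle e₂ d₂ → sqle (g e₁ e₂) (g d₁ d₂))
    {I₁ I₂ : Set (ℝ≥0∞ × ℝ≥0∞)} (h₁ : I₁.Finite) (h₂ : I₂.Finite) :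
    PF (Set.image2 g (PF I₁) (PF I₂)) = PF (Set.image2 g I₁ I₂) := by
  refine (PF_eq_of_dominated (Set.image2_subset (PF_subset I₁) (PF_subset I₂)) ?_).symm
  rintro _ ⟨d₁, hd₁, d₂, hd₂, rfl⟩
  obtain ⟨e₁, he₁, hle₁⟩ := exists_mem_PF_sqle h₁ hd₁
  obtain ⟨e₂, he₂, hle₂⟩ := exists_mem_PF_sqle h₂ hd₂
  exact ⟨g e₁ e₂, Set.mem_image2_of_mem he₁ he₂, hg hle₁ hle₂⟩

lemma PsiF_eq_image2 (I₁ I₂ : Set (ℝ≥0∞ × ℝ≥0∞)) (p : ℝ≥0∞) :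
    PsiF I₁ I₂ p = Set.image2 (fun d₁ d₂ => psi d₁ d₂ p) I₁ I₂ := by
  ext d
  simp [PsiF, eq_comm]

lemma psi_mono (p : ℝ≥0∞) ⦃d₁ d₂ e₁ e₂ : ℝ≥0∞ × ℝ≥0∞⦄ (h₁ : sqle e₁ d₁) (h₂ : sqle e₂ d₂) :
    sqle (psi e₁ e₂ p) (psi d₁ d₂ p) :=
  ⟨add_le_add (mul_le_mul_right h₁.1 _) (mul_le_mul_right h₂.1 _), max_le_max h₁.2 h₂.2⟩

end Pareto

section Split

variable [DecidableEq F]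

def extF (f : F) (x : {g : F // g ≠ f} → Bool) (b : Bool) : F → Bool :=
  fun g => if h : g = f then b else x ⟨g, h⟩

lemma extF_self (f : F) (x : {g : F // g ≠ f} → Bool) (b : Bool) : extF f x b f = b :=
  dif_pos rfl

lemma extF_comp_val (f : F) (x : {g : F // g ≠ f} → Bool) (b : Bool) :
    (fun g : {g : F // g ≠ f} => extF f x b g.1) = x := by
  funext g
  exact dif_neg g.2

lemma funSplitAt_symm_eq_extF (f : F) (p : Bool × ({g : F // g ≠ f} → Bool)) :
    (Equiv.funSplitAt f Bool).symm p = extF f p.2 p.1 := by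
  funext g
  by_cases h : g = f
  · subst h
    simp [Equiv.funSplitAt, Equiv.piSplitAt, extF]
  · simp [Equiv.funSplitAt, Equiv.piSplitAt, extF, h]

lemma wght_extF [Fintype F] (π : F → ℝ≥0∞) (f : F) (x : {g : F // g ≠ f} → Bool) (b : Bool) :
    wght π (extF f x b) = (if b then π f else 1 - π f) * wght (fun g => π g.1) x := by
  unfold wght
  rw [Fintype.prod_eq_mul_prod_compl f, extF_self,
    Finset.prod_subtype ({f}ᶜ : Finset F) (p := (· ≠ f)) (fun g => by simp)]
  congr 1
  exact Finset.prod_congr rfl fun g _ => by rw [congrFun (extF_comp_val f x b) g]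

instance Strategy.finite [Finite A] (Λ : Scenario F A) : Finite (Strategy Λ) := by
  unfold Strategy
  infer_instance

noncomputable def tauM [Fintype F] [Fintype A] (Λ : Scenario F A) (π : F → ℝ≥0∞)
    (γ : A → ℝ≥0∞) (σ : Strategy Λ) : ℝ≥0∞ × ℝ≥0∞ :=
  (probS Λ π σ, maxCost Λ γ σ)

section Star

variable (Λ : Scenario F A) (f : F) (hf : ∀ a, f ∈ Λ.Q a)
  (σ0 : Strategy (Λ.reduceF f false)) (σ1 : Strategy (Λ.reduceF f true))

lemma hatS_star (x : F → Bool) (a : A) :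
    hatS Λ (star Λ f hf σ0 σ1) x a =
      if x f then hatS (Λ.reduceF f true) σ1 (fun g => x g.1) a
      else hatS (Λ.reduceF f false) σ0 (fun g => x g.1) a := by
  change ((!(x f)) && hatS (Λ.reduceF f false) σ0 (fun g => x g.1) a ||
    (x f && hatS (Λ.reduceF f true) σ1 (fun g => x g.1) a)) = _
  cases x f <;> simp

lemma hatS_star_extF (x : {g : F // g ≠ f} → Bool) (b : Bool) :
    hatS Λ (star Λ f hf σ0 σ1) (extF f x b) =
      if b then hatS (Λ.reduceF f true) σ1 x else hatS (Λ.reduceF f false) σ0 x := by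
  funext a
  rw [hatS_star, extF_self, extF_comp_val]
  cases b <;> rfl

lemma probS_star [Fintype F] (π : F → ℝ≥0∞) :
    probS Λ π (star Λ f hf σ0 σ1) =
      (1 - π f) * probS (Λ.reduceF f false) (fun g => π g.1) σ0
        + π f * probS (Λ.reduceF f true) (fun g => π g.1) σ1 := by
  unfold probS
  rw [← (Equiv.funSplitAt f Bool).symm.sum_comp, Fintype.sum_prod_type, Fintype.sum_bool,
    add_comm, Finset.mul_sum, Finset.mul_sum]
  simp only [funSplitAt_symm_eq_extF, wght_extF, hatS_star_extF, mul_assoc]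
  rfl

lemma costOf_star_extF [Fintype A] (γ : A → ℝ≥0∞) (x : {g : F // g ≠ f} → Bool) (b : Bool) :
    costOf Λ γ (star Λ f hf σ0 σ1) (extF f x b) =
      if b then costOf (Λ.reduceF f true) γ σ1 x else costOf (Λ.reduceF f false) γ σ0 x := by
  unfold costOf
  rw [hatS_star_extF]
  cases b <;> rfl

lemma maxCost_star [Fintype F] [Fintype A] (γ : A → ℝ≥0∞) :
    maxCost Λ γ (star Λ f hf σ0 σ1) =
      max (maxCost (Λ.reduceF f false) γ σ0) (maxCost (Λ.reduceF f true) γ σ1) := by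
  unfold maxCost
  rw [← (Equiv.funSplitAt f Bool).symm.iSup_comp, iSup_prod, iSup_bool_eq, sup_comm]
  simp only [funSplitAt_symm_eq_extF, costOf_star_extF]
  rfl

lemma tauM_star [Fintype F] [Fintype A] (π : F → ℝ≥0∞) (γ : A → ℝ≥0∞) :
    tauM Λ π γ (star Λ f hf σ0 σ1) =
      psi (tauM (Λ.reduceF f false) (fun g => π g.1) γ σ0)
        (tauM (Λ.reduceF f true) (fun g => π g.1) γ σ1) (π f) := by
  rw [tauM, probS_star, maxCost_star]
  rfl

end Star

/-- The restriction `σ|_{x_f = b}` of a strategy of `Λ`, a strategy of `Λ^{f/b}`. -/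
def splitS (Λ : Scenario F A) (f : F) (σ : Strategy Λ) (b : Bool) : Strategy (Λ.reduceF f b) :=
  fun a x =>
    σ a fun g => if h : g.1 = f then b else x ⟨⟨g.1, h⟩, Finset.mem_subtype.mpr g.2⟩

lemma star_splitS (Λ : Scenario F A) (f : F) (hf : ∀ a, f ∈ Λ.Q a) (σ : Strategy Λ) :
    star Λ f hf (splitS Λ f σ false) (splitS Λ f σ true) = σ := by
  funext a x
  have hsplit : ∀ b : Bool, x ⟨f, hf a⟩ = b → splitS Λ f σ b a (restr Λ f b a x) = σ a x := by
    intro b hb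
    refine congrArg (σ a) (funext fun g => ?_)
    by_cases h : g.1 = f
    · rw [dif_pos h, ← hb]
      exact congrArg x (Subtype.ext h.symm)
    · exact dif_neg h
  unfold _root_.star
  cases hb : x ⟨f, hf a⟩
  · simpa using hsplit false hb
  · simpa using hsplit true hb

lemma range_tauM_eq_PsiF [Fintype F] [Fintype A] (Λ : Scenario F A) (f : F)
    (hf : ∀ a, f ∈ Λ.Q a) (π : F → ℝ≥0∞) (γ : A → ℝ≥0∞) :
    Set.range (tauM Λ π γ) =
      PsiF (Set.range (tauM (Λ.reduceF f false) (fun g => π g.1) γ))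
        (Set.range (tauM (Λ.reduceF f true) (fun g => π g.1) γ)) (π f) := by
  have hsurj : Function.Surjective fun σs : Strategy (Λ.reduceF f false) ×
      Strategy (Λ.reduceF f true) => star Λ f hf σs.1 σs.2 :=
    fun σ => ⟨(splitS Λ f σ false, splitS Λ f σ true), star_splitS Λ f hf σ⟩
  rw [PsiF_eq_image2, Set.image2_range, ← hsurj.range_comp]
  exact congrArg Set.range (funext fun σs => tauM_star Λ f hf σs.1 σs.2 π γ)

end Split

theorem PMC_recursion_f_general [Fintype F] [Fintype A] [DecidableEq F]
    (Λ : Scenario F A) (π : F → ℝ≥0∞) (γ : A → ℝ≥0∞)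
    (f : F) (hf : ∀ a, f ∈ Λ.Q a) :
    PF (Set.range (fun σ : Strategy Λ => (probS Λ π σ, maxCost Λ γ σ))) =
      PF (PsiF
        (PF (Set.range (fun σ0 : Strategy (Λ.reduceF f false) =>
          (probS (Λ.reduceF f false) (fun g => π g.1) σ0,
            maxCost (Λ.reduceF f false) γ σ0))))
        (PF (Set.range (fun σ1 : Strategy (Λ.reduceF f true) =>
          (probS (Λ.reduceF f true) (fun g => π g.1) σ1,
            maxCost (Λ.reduceF f true) γ σ1))))
        (π f)) := by
  rw [PsiF_eq_image2, PF_image2_PF (psi_mono (π f)) (Set.finite_range _) (Set.finite_range _),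
    ← PsiF_eq_image2]
  exact congrArg PF (range_tauM_eq_PsiF Λ f hf π γ)

/-- The recursion `PMC(Λ̂) = PF(Ψ_F(PMC(Λ̂^{f/0}), PMC(Λ̂^{f/1}), π_f))`, where
`PMC(Λ̂) = PF(τ_m(Σ_Λ))`. -/
theorem PMC_recursion_f [Fintype F] [Fintype A] [DecidableEq F]
    (Λ : Scenario F A) (π : F → ℝ≥0∞) (hπ : ∀ g, π g ≤ 1) (γ : A → ℝ≥0∞)
    (f : F) (hf : ∀ a, f ∈ Λ.Q a) :
    PF (Set.range (fun σ : Strategy Λ => (probS Λ π σ, maxCost Λ γ σ))) =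
      PF (PsiF
        (PF (Set.range (fun σ0 : Strategy (Λ.reduceF f false) =>
          (probS (Λ.reduceF f false) (fun g => π g.1) σ0,
            maxCost (Λ.reduceF f false) γ σ0))))
        (PF (Set.range (fun σ1 : Strategy (Λ.reduceF f true) =>
          (probS (Λ.reduceF f true) (fun g => π g.1) σ1,
            maxCost (Λ.reduceF f true) γ σ1))))
        (π f)) :=
  PMC_recursion_f_general Λ π γ f hf
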